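/- There exists a universal constant C < infinity such that the following holds. Let J <= K be positive integers, let S and S-hat be real J x K matrices with ||S|| <= 1 and with smallest (J-th) singular value sigma of S satisfying sigma > 0, and let A be a real symmetric positive semidefinite K x K matrix with ||A - I_K|| <= 1/2 and sqrt(2) ||S-hat - S|| + (1 + 2^{-1/2})^{-1} ||A - I_K|| <= sigma / 2. Then || ( S-hat A^{-1} S-hat' )^{-1} S-hat A^{-1} - ( S S' )^{-1} S || <= C * ( sigma^{-1} ||A - I_K|| + sigma^{-2} ( ||S-hat - S|| + ||A - I_K|| ) ). -/

import Mathlib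

noncomputable section
open Matrix

/-- Euclidean norm on ℝ^K. -/
def eucNorm {K : ℕ} (v : Fin K → ℝ) : ℝ := Real.sqrt (∑ k, v k ^ 2)

/-- Spectral norm (largest singular value) of a real matrix. -/
def specNorm {m n : ℕ} (A : Matrix (Fin m) (Fin n) ℝ) : ℝ :=
  sSup {r | ∃ v : Fin n → ℝ, eucNorm v ≤ 1 ∧ r = eucNorm (A.mulVec v)}

/-- Smallest (J-th) singular value of a `J × K` matrix (`J ≤ K`):
`inf { ‖Sᵀ v‖ : v ∈ ℝ^J, ‖v‖ = 1 }`. -/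
def minSingVal {J K : ℕ} (S : Matrix (Fin J) (Fin K) ℝ) : ℝ :=
  sInf {r | ∃ v : Fin J → ℝ, eucNorm v = 1 ∧ r = eucNorm (Sᵀ.mulVec v)}


/-!
Let `R` be the positive semidefinite square root of `A` and `B := Ŝ R⁻¹`, so that
`(Ŝ A⁻¹ Ŝᵀ)⁻¹ Ŝ A⁻¹ = (B Bᵀ)⁻¹ B R⁻¹`. Since `‖A - 1‖ ≤ 1/2`, `‖R⁻¹‖ ≤ 99/70` and
`‖R⁻¹ - 1‖ = ‖R⁻¹ (1 - A) (1 + R)⁻¹‖ ≤ (81/70) ‖A - 1‖`, so the smallness hypothesis gives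
`‖B - S‖ ≤ 0.99 σ`, and by Weyl's inequality the smallest singular value of `B` is at least `σ/100`.

For a matrix `X` of full row rank, `‖(X Xᵀ)⁻¹ X‖` is the reciprocal of its smallest singular value,
and with the orthogonal projection `Q := Sᵀ (S Sᵀ)⁻¹ S`,
`(B Bᵀ)⁻¹ B - (S Sᵀ)⁻¹ S = (B Bᵀ)⁻¹ (B - S) (1 - Q) - (B Bᵀ)⁻¹ B (B - S)ᵀ (S Sᵀ)⁻¹ S`.
This bounds `(B Bᵀ)⁻¹ B - (S Sᵀ)⁻¹ S` by `O(σ⁻²) ‖B - S‖`; the remaining factor `R⁻¹` costs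
`σ⁻¹ ‖R⁻¹ - 1‖`.
-/

open WithLp
open scoped RealInnerProductSpace

lemma real_inner_toLp_toLp {n : Type*} [Fintype n] (v w : n → ℝ) :
    ⟪toLp 2 v, toLp 2 w⟫ = v ⬝ᵥ w := by
  simp [EuclideanSpace.inner_toLp_toLp, dotProduct_comm]

lemma norm_toLp_sq_eq_dotProduct {n : Type*} [Fintype n] (v : n → ℝ) :
    ‖toLp 2 v‖ ^ 2 = v ⬝ᵥ v := by
  rw [← real_inner_self_eq_norm_sq, real_inner_toLp_toLp]

namespace Matrix

open scoped Norms.L2Operator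

variable {m n : Type*} [Fintype m] [Fintype n]

def NormBoundedBelow (A : Matrix m n ℝ) (c : ℝ) : Prop :=
  ∀ v : n → ℝ, c * ‖toLp 2 v‖ ≤ ‖toLp 2 (A *ᵥ v)‖

lemma NormBoundedBelow.mono {A : Matrix m n ℝ} {c d : ℝ} (h : A.NormBoundedBelow c)
    (hdc : d ≤ c) : A.NormBoundedBelow d :=
  fun v => (mul_le_mul_of_nonneg_right hdc (norm_nonneg _)).trans (h v)

lemma NormBoundedBelow.mul_transpose {A : Matrix m n ℝ} {c : ℝ} (h : Aᵀ.NormBoundedBelow c)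
    (hc : 0 ≤ c) : (A * Aᵀ).NormBoundedBelow (c * c) := by
  intro v
  have hgram : ‖toLp 2 (Aᵀ *ᵥ v)‖ ^ 2 = ⟪toLp 2 v, toLp 2 ((A * Aᵀ) *ᵥ v)⟫ := by
    rw [norm_toLp_sq_eq_dotProduct, real_inner_toLp_toLp, ← mulVec_mulVec, dotProduct_mulVec,
      vecMul_transpose, dotProduct_comm]
  have hcs := real_inner_le_norm (toLp 2 v) (toLp 2 ((A * Aᵀ) *ᵥ v))
  have hcv : 0 ≤ c * ‖toLp 2 v‖ := mul_nonneg hc (norm_nonneg _)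
  have hsq : (c * ‖toLp 2 v‖) * (c * ‖toLp 2 v‖)
      ≤ ‖toLp 2 v‖ * ‖toLp 2 ((A * Aᵀ) *ᵥ v)‖ := by
    nlinarith [h v]
  rcases (norm_nonneg (toLp 2 v)).eq_or_lt with h0 | hpos
  · rw [← h0, mul_zero]
    exact norm_nonneg _
  · nlinarith

lemma norm_sq_mulVec_of_mul_self {A R : Matrix n n ℝ} (hsymm : Rᵀ = R) (hsq : R * R = A)
    (v : n → ℝ) : ‖toLp 2 (R *ᵥ v)‖ ^ 2 = v ⬝ᵥ A *ᵥ v := by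
  rw [norm_toLp_sq_eq_dotProduct, ← hsq, ← mulVec_mulVec, dotProduct_mulVec, ← mulVec_transpose,
    hsymm, dotProduct_comm]

section OperatorNorm

variable [DecidableEq n]

lemma norm_toLp_mulVec_le (A : Matrix m n ℝ) (v : n → ℝ) :
    ‖toLp 2 (A *ᵥ v)‖ ≤ ‖A‖ * ‖toLp 2 v‖ :=
  l2_opNorm_mulVec A (toLp 2 v)

lemma l2_opNorm_le_of_mulVec_le (A : Matrix m n ℝ) {c : ℝ} (hc : 0 ≤ c)
    (h : ∀ v, ‖toLp 2 (A *ᵥ v)‖ ≤ c * ‖toLp 2 v‖) : ‖A‖ ≤ c :=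
  ContinuousLinearMap.opNorm_le_bound _ hc fun x => h x.ofLp

lemma l2_opNorm_mul_sub_le (T S : Matrix m n ℝ) (R : Matrix n n ℝ) :
    ‖T * R - S‖ ≤ ‖T - S‖ * ‖R‖ + ‖S‖ * ‖R - 1‖ := by
  have hsplit : T * R - S = (T - S) * R + S * (R - 1) := by
    simp only [Matrix.sub_mul, Matrix.mul_sub, Matrix.mul_one]
    abel
  rw [hsplit]
  exact (norm_add_le _ _).trans (add_le_add (l2_opNorm_mul _ _) (l2_opNorm_mul _ _))

lemma NormBoundedBelow.sub (B : Matrix m n ℝ) {S : Matrix m n ℝ} {c : ℝ}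
    (hS : S.NormBoundedBelow c) : B.NormBoundedBelow (c - ‖B - S‖) := by
  intro v
  have hBS := norm_toLp_mulVec_le (B - S) v
  have htri := norm_sub_norm_le (toLp 2 (S *ᵥ v)) (toLp 2 ((S - B) *ᵥ v))
  rw [← toLp_sub, ← sub_mulVec, sub_sub_cancel, ← neg_sub B S, neg_mulVec, toLp_neg,
    norm_neg] at htri
  nlinarith [hS v]

lemma NormBoundedBelow.isUnit_det {A : Matrix n n ℝ} {c : ℝ} (h : A.NormBoundedBelow c)
    (hc : 0 < c) : IsUnit A.det := by
  rw [isUnit_iff_ne_zero]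
  intro hdet
  obtain ⟨v, hv, hAv⟩ := exists_mulVec_eq_zero_iff.mpr hdet
  have hle := h v
  rw [hAv, toLp_zero, norm_zero] at hle
  have : ‖toLp 2 v‖ = 0 := le_antisymm (nonpos_of_mul_nonpos_right hle hc) (norm_nonneg _)
  exact hv (by simpa using this)

lemma NormBoundedBelow.norm_inv_le {A : Matrix n n ℝ} {c : ℝ} (h : A.NormBoundedBelow c)
    (hc : 0 < c) : ‖A⁻¹‖ ≤ c⁻¹ := by
  refine l2_opNorm_le_of_mulVec_le _ (inv_nonneg.mpr hc.le) fun w => ?_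
  have hle := h (A⁻¹ *ᵥ w)
  rw [mulVec_mulVec, mul_nonsing_inv A (h.isUnit_det hc), one_mulVec] at hle
  rw [inv_mul_eq_div, le_div_iff₀ hc]
  linarith

end OperatorNorm

section SquareRoot

variable [DecidableEq n] {A R : Matrix n n ℝ}

lemma one_sub_mul_norm_sq_le_dotProduct (A : Matrix n n ℝ) (v : n → ℝ) :
    (1 - ‖A - 1‖) * ‖toLp 2 v‖ ^ 2 ≤ v ⬝ᵥ A *ᵥ v := by
  have hsplit : v ⬝ᵥ A *ᵥ v = ‖toLp 2 v‖ ^ 2 + ⟪toLp 2 v, toLp 2 ((A - 1) *ᵥ v)⟫ := by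
    rw [norm_toLp_sq_eq_dotProduct, real_inner_toLp_toLp, sub_mulVec, one_mulVec,
      dotProduct_sub]
    ring
  have hcs := neg_le_of_abs_le (abs_real_inner_le_norm (toLp 2 v) (toLp 2 ((A - 1) *ᵥ v)))
  have hop := norm_toLp_mulVec_le (A - 1) v
  nlinarith [norm_nonneg (toLp 2 v)]

lemma normBoundedBelow_of_mul_self (hsymm : Rᵀ = R) (hsq : R * R = A) {c : ℝ} (hc : 0 ≤ c)
    (hcA : c ^ 2 ≤ 1 - ‖A - 1‖) : R.NormBoundedBelow c := by
  intro v
  have hlow := one_sub_mul_norm_sq_le_dotProduct A v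
  rw [← norm_sq_mulVec_of_mul_self hsymm hsq] at hlow
  refine (pow_le_pow_iff_left₀ (mul_nonneg hc (norm_nonneg _)) (norm_nonneg _)
    two_ne_zero).mp ?_
  nlinarith [sq_nonneg ‖toLp 2 v‖]

lemma NormBoundedBelow.one_add (hR : R.PosSemidef) {c d : ℝ} (h : R.NormBoundedBelow c)
    (hc : 0 ≤ c) (hd : 0 ≤ d) (hdc : d ^ 2 ≤ 1 + c ^ 2) : (1 + R).NormBoundedBelow d := by
  intro v
  have hexpand : ‖toLp 2 ((1 + R) *ᵥ v)‖ ^ 2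
      = ‖toLp 2 v‖ ^ 2 + 2 * (v ⬝ᵥ R *ᵥ v) + ‖toLp 2 (R *ᵥ v)‖ ^ 2 := by
    simp only [norm_toLp_sq_eq_dotProduct, add_mulVec, one_mulVec, dotProduct_add,
      add_dotProduct, dotProduct_comm (R *ᵥ v) v]
    ring
  have hpos : 0 ≤ v ⬝ᵥ R *ᵥ v := by simpa using hR.dotProduct_mulVec_nonneg v
  have hRv := pow_le_pow_left₀ (mul_nonneg hc (norm_nonneg _)) (h v) 2
  refine (pow_le_pow_iff_left₀ (mul_nonneg hd (norm_nonneg _)) (norm_nonneg _)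
    two_ne_zero).mp ?_
  nlinarith [sq_nonneg ‖toLp 2 v‖]

lemma inv_sub_one_eq_of_mul_self (hR : IsUnit R.det) (hR1 : IsUnit (1 + R).det)
    (hsq : R * R = A) : R⁻¹ - 1 = R⁻¹ * (1 - A) * (1 + R)⁻¹ := by
  have hfactor : 1 - A = (1 - R) * (1 + R) := by
    rw [← hsq]
    noncomm_ring
  rw [hfactor, Matrix.mul_assoc, Matrix.mul_assoc, mul_nonsing_inv _ hR1, Matrix.mul_one,
    Matrix.mul_sub, Matrix.mul_one, nonsing_inv_mul _ hR]

/- `(70/99)² ≤ 1/2` and `(11/9)² ≤ 1 + (70/99)²` give the lower bounds used for `R` and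
`1 + R`. -/
lemma normBoundedBelow_sqrt (hR : R.PosSemidef) (hsq : R * R = A) (hA : ‖A - 1‖ ≤ 1 / 2) :
    R.NormBoundedBelow (70 / 99) := by
  refine normBoundedBelow_of_mul_self ?_ hsq (by norm_num) (by linarith)
  simpa using hR.1.eq

lemma l2_opNorm_inv_sqrt_le (hR : R.PosSemidef) (hsq : R * R = A) (hA : ‖A - 1‖ ≤ 1 / 2) :
    ‖R⁻¹‖ ≤ 99 / 70 := by
  simpa using (normBoundedBelow_sqrt hR hsq hA).norm_inv_le (by norm_num)

lemma l2_opNorm_inv_sqrt_sub_one_le (hR : R.PosSemidef) (hsq : R * R = A)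
    (hA : ‖A - 1‖ ≤ 1 / 2) : ‖R⁻¹ - 1‖ ≤ 81 / 70 * ‖A - 1‖ := by
  have hbelow := normBoundedBelow_sqrt hR hsq hA
  have hbelow1 := hbelow.one_add hR (by norm_num) (d := 11 / 9) (by norm_num) (by norm_num)
  rw [inv_sub_one_eq_of_mul_self (hbelow.isUnit_det (by norm_num))
    (hbelow1.isUnit_det (by norm_num)) hsq]
  calc _ ≤ ‖R⁻¹‖ * ‖1 - A‖ * ‖(1 + R)⁻¹‖ :=
        (l2_opNorm_mul _ _).trans
          (mul_le_mul_of_nonneg_right (l2_opNorm_mul _ _) (norm_nonneg _))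
    _ ≤ 99 / 70 * ‖A - 1‖ * (9 / 11) := by
        rw [norm_sub_rev]
        gcongr
        · exact l2_opNorm_inv_sqrt_le hR hsq hA
        · simpa using hbelow1.norm_inv_le (by norm_num)
    _ = 81 / 70 * ‖A - 1‖ := by ring

end SquareRoot

section PseudoInverse

variable [DecidableEq m] {S B : Matrix m n ℝ}

lemma mul_transpose_mul_pinv (hS : IsUnit (S * Sᵀ).det) {p : Type*} (X : Matrix m p ℝ) :
    S * (Sᵀ * ((S * Sᵀ)⁻¹ * X)) = X := by
  rw [← Matrix.mul_assoc, ← Matrix.mul_assoc, mul_nonsing_inv _ hS, Matrix.one_mul]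

lemma pinv_mul_mul_transpose (hS : IsUnit (S * Sᵀ).det) {p : Type*} (X : Matrix m p ℝ) :
    (S * Sᵀ)⁻¹ * (S * (Sᵀ * X)) = X := by
  rw [← Matrix.mul_assoc S, ← Matrix.mul_assoc, nonsing_inv_mul _ hS, Matrix.one_mul]

lemma transpose_inv_mul_transpose : ((S * Sᵀ)⁻¹)ᵀ = (S * Sᵀ)⁻¹ := by
  rw [transpose_nonsing_inv, transpose_mul, transpose_transpose]

variable [DecidableEq n]

lemma pinv_sub_pinv (hS : IsUnit (S * Sᵀ).det) (hB : IsUnit (B * Bᵀ).det) :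
    (B * Bᵀ)⁻¹ * B - (S * Sᵀ)⁻¹ * S
      = (B * Bᵀ)⁻¹ * (B - S) * (1 - Sᵀ * ((S * Sᵀ)⁻¹ * S))
        - (B * Bᵀ)⁻¹ * B * ((B - S)ᵀ * ((S * Sᵀ)⁻¹ * S)) := by
  simp only [transpose_sub, Matrix.mul_sub, Matrix.sub_mul, Matrix.mul_one, Matrix.mul_assoc,
    mul_transpose_mul_pinv hS, pinv_mul_mul_transpose hB]
  abel

/- No invertibility is needed: `Matrix.mul_inv_rev` holds for the junk inverse as well. -/
lemma weighted_pinv_eq_of_mul_self {A R : Matrix n n ℝ} (hsymm : Rᵀ = R) (hsq : R * R = A)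
    (T : Matrix m n ℝ) :
    (T * A⁻¹ * Tᵀ)⁻¹ * T * A⁻¹ = ((T * R⁻¹) * (T * R⁻¹)ᵀ)⁻¹ * (T * R⁻¹) * R⁻¹ := by
  rw [← hsq, mul_inv_rev, transpose_mul, transpose_nonsing_inv, hsymm]
  simp only [Matrix.mul_assoc]

lemma l2_opNorm_transpose (A : Matrix m n ℝ) : ‖Aᵀ‖ = ‖A‖ := by
  rw [← conjTranspose_eq_transpose_of_trivial, l2_opNorm_conjTranspose]

lemma l2_opNorm_mul_transpose_self (A : Matrix m n ℝ) : ‖A * Aᵀ‖ = ‖A‖ * ‖A‖ := by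
  simpa [l2_opNorm_transpose] using l2_opNorm_conjTranspose_mul_self Aᵀ

lemma l2_opNorm_le_one_of_idempotent {P : Matrix n n ℝ} (hsymm : Pᵀ = P) (hidem : P * P = P) :
    ‖P‖ ≤ 1 := by
  have h := l2_opNorm_mul_transpose_self P
  rw [hsymm, hidem] at h
  nlinarith [norm_nonneg P]

lemma l2_opNorm_pinv_mul_self (hS : IsUnit (S * Sᵀ).det) :
    ‖(S * Sᵀ)⁻¹ * S‖ * ‖(S * Sᵀ)⁻¹ * S‖ = ‖(S * Sᵀ)⁻¹‖ := by
  rw [← l2_opNorm_mul_transpose_self, transpose_mul, transpose_inv_mul_transpose,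
    Matrix.mul_assoc, pinv_mul_mul_transpose hS]

lemma l2_opNorm_one_sub_projection_le (hS : IsUnit (S * Sᵀ).det) :
    ‖1 - Sᵀ * ((S * Sᵀ)⁻¹ * S)‖ ≤ 1 := by
  apply l2_opNorm_le_one_of_idempotent
  · rw [transpose_sub, transpose_one, transpose_mul, transpose_mul, transpose_inv_mul_transpose,
      transpose_transpose, Matrix.mul_assoc]
  · simp only [Matrix.sub_mul, Matrix.mul_sub, Matrix.one_mul, Matrix.mul_one, Matrix.mul_assoc,
      mul_transpose_mul_pinv hS]
    abel

variable {σ τ : ℝ}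

lemma NormBoundedBelow.l2_opNorm_pinv_le (h : Sᵀ.NormBoundedBelow σ) (hσ : 0 < σ) :
    ‖(S * Sᵀ)⁻¹ * S‖ ≤ σ⁻¹ := by
  have hgram := h.mul_transpose hσ.le
  have hsq := l2_opNorm_pinv_mul_self (hgram.isUnit_det (mul_pos hσ hσ))
  have hinv := hgram.norm_inv_le (mul_pos hσ hσ)
  rw [mul_inv] at hinv
  exact (mul_self_le_mul_self_iff (norm_nonneg _) (inv_nonneg.mpr hσ.le)).mpr (hsq ▸ hinv)

lemma l2_opNorm_pinv_sub_pinv_le (hS : Sᵀ.NormBoundedBelow σ) (hB : Bᵀ.NormBoundedBelow τ)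
    (hσ : 0 < σ) (hτ : 0 < τ) :
    ‖(B * Bᵀ)⁻¹ * B - (S * Sᵀ)⁻¹ * S‖ ≤ ((τ * τ)⁻¹ + τ⁻¹ * σ⁻¹) * ‖B - S‖ := by
  have hSgram := hS.mul_transpose hσ.le
  have hBgram := hB.mul_transpose hτ.le
  have hSunit := hSgram.isUnit_det (mul_pos hσ hσ)
  have hBinv := hBgram.norm_inv_le (mul_pos hτ hτ)
  rw [pinv_sub_pinv hSunit (hBgram.isUnit_det (mul_pos hτ hτ))]
  calc _ ≤ ‖(B * Bᵀ)⁻¹‖ * ‖B - S‖ * ‖1 - Sᵀ * ((S * Sᵀ)⁻¹ * S)‖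
          + ‖(B * Bᵀ)⁻¹ * B‖ * (‖(B - S)ᵀ‖ * ‖(S * Sᵀ)⁻¹ * S‖) := by
        refine (norm_sub_le _ _).trans (add_le_add ?_ ?_)
        · exact (l2_opNorm_mul _ _).trans
            (mul_le_mul_of_nonneg_right (l2_opNorm_mul _ _) (norm_nonneg _))
        · exact (l2_opNorm_mul _ _).trans
            (mul_le_mul_of_nonneg_left (l2_opNorm_mul _ _) (norm_nonneg _))
    _ ≤ (τ * τ)⁻¹ * ‖B - S‖ * 1 + τ⁻¹ * (‖B - S‖ * σ⁻¹) := by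
        rw [l2_opNorm_transpose]
        gcongr
        · exact l2_opNorm_one_sub_projection_le hSunit
        · exact hB.l2_opNorm_pinv_le hτ
        · exact hS.l2_opNorm_pinv_le hσ
    _ = ((τ * τ)⁻¹ + τ⁻¹ * σ⁻¹) * ‖B - S‖ := by ring

lemma l2_opNorm_pinv_mul_sub_pinv_le (hS : Sᵀ.NormBoundedBelow σ) (hB : Bᵀ.NormBoundedBelow τ)
    (hσ : 0 < σ) (hτ : 0 < τ) (R : Matrix n n ℝ) :
    ‖(B * Bᵀ)⁻¹ * B * R - (S * Sᵀ)⁻¹ * S‖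
      ≤ ((τ * τ)⁻¹ + τ⁻¹ * σ⁻¹) * ‖B - S‖ * ‖R‖ + σ⁻¹ * ‖R - 1‖ := by
  refine (l2_opNorm_mul_sub_le _ _ R).trans ?_
  gcongr
  · exact l2_opNorm_pinv_sub_pinv_le hS hB hσ hτ
  · exact hS.l2_opNorm_pinv_le hσ

end PseudoInverse

end Matrix

open Matrix
open scoped Matrix.Norms.L2Operator

lemma eucNorm_eq_norm {n : ℕ} (v : Fin n → ℝ) : eucNorm v = ‖toLp 2 v‖ := by
  simp [eucNorm, EuclideanSpace.norm_eq]

lemma specNorm_eq_l2_opNorm {m n : ℕ} (A : Matrix (Fin m) (Fin n) ℝ) : specNorm A = ‖A‖ := by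
  set f := (toEuclideanLin (𝕜 := ℝ) (m := Fin m) (n := Fin n)).trans
    LinearMap.toContinuousLinearMap A
  have hset : {r | ∃ v : Fin n → ℝ, eucNorm v ≤ 1 ∧ r = eucNorm (A *ᵥ v)}
      = (fun x => ‖f x‖) '' Metric.closedBall 0 1 := by
    ext r
    simp only [Set.mem_ofPred_eq, Set.mem_image, mem_closedBall_zero_iff]
    constructor
    · rintro ⟨v, hv, rfl⟩
      exact ⟨toLp 2 v, (eucNorm_eq_norm v).symm.trans_le hv, (eucNorm_eq_norm _).symm⟩
    · rintro ⟨x, hx, rfl⟩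
      exact ⟨x.ofLp, (eucNorm_eq_norm _).trans_le hx, (eucNorm_eq_norm _).symm⟩
  rw [specNorm, hset, ContinuousLinearMap.sSup_unitClosedBall_eq_norm, l2_opNorm_def]

lemma minSingVal_normBoundedBelow {J K : ℕ} (S : Matrix (Fin J) (Fin K) ℝ) :
    Sᵀ.NormBoundedBelow (minSingVal S) := by
  intro v
  rcases eq_or_ne v 0 with rfl | hv
  · simp
  have hpos : 0 < ‖toLp 2 v‖ := by simpa using hv
  have hunit : eucNorm (‖toLp 2 v‖⁻¹ • v) = 1 := by
    rw [eucNorm_eq_norm, toLp_smul, norm_smul, norm_inv, norm_norm, inv_mul_cancel₀ hpos.ne']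
  have hmin : minSingVal S ≤ eucNorm (Sᵀ *ᵥ (‖toLp 2 v‖⁻¹ • v)) :=
    csInf_le ⟨0, fun r ⟨w, _, hr⟩ => hr ▸ Real.sqrt_nonneg _⟩ ⟨_, hunit, rfl⟩
  rw [eucNorm_eq_norm, mulVec_smul, toLp_smul, norm_smul, norm_inv, norm_norm,
    inv_mul_eq_div, le_div_iff₀ hpos] at hmin
  exact hmin

/- `99/70` and `81/70` are the bounds for `‖R⁻¹‖` and `‖R⁻¹ - 1‖`; the factor `99/100` leaves
`σ/100` for the smallest singular value of `Ŝ R⁻¹`. -/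
lemma rational_le_of_sqrt_two_le {D E σ : ℝ} (hD : 0 ≤ D) (hE : 0 ≤ E)
    (h : √2 * D + (1 + (√2)⁻¹)⁻¹ * E ≤ σ / 2) : 99 / 70 * D + 81 / 70 * E ≤ 99 / 100 * σ := by
  have hsqrt : 1.41 < √2 := by
    rw [Real.lt_sqrt (by norm_num)]
    norm_num
  have hweight : 81 / 70 / (198 / 100) ≤ (1 + (√2)⁻¹)⁻¹ := by
    rw [inv_eq_one_div, le_div_iff₀ (by positivity), ← sub_nonneg]
    have : 0 < √2 := by positivity
    field_simp
    nlinarith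
  nlinarith [mul_le_mul_of_nonneg_right hsqrt.le hD, mul_le_mul_of_nonneg_right hweight hE]

/-- there is a universal constant `C` bounding the spectral norm
of `(ŜA⁻¹Ŝ')⁻¹ŜA⁻¹ - (SS')⁻¹S`.  Here `Asq` is the positive-semidefinite
symmetric square root of `A` (so `A^{-1/2} = Asq⁻¹`). -/
theorem stmt13 :
    ∃ C : ℝ, 0 ≤ C ∧
      ∀ (J K : ℕ), 0 < J → J ≤ K →
        ∀ (S Shat : Matrix (Fin J) (Fin K) ℝ) (σ : ℝ)
          (A Asq : Matrix (Fin K) (Fin K) ℝ),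
          specNorm S ≤ 1 → σ = minSingVal S → 0 < σ →
          A.PosSemidef → specNorm (A - 1) ≤ 1 / 2 →
          Asq.PosSemidef → Asq * Asq = A →
          Real.sqrt 2 * specNorm (Shat - S)
              + (1 + (Real.sqrt 2)⁻¹)⁻¹ * specNorm (A - 1) ≤ σ / 2 →
          specNorm ((Shat * A⁻¹ * Shatᵀ)⁻¹ * Shat * A⁻¹ - (S * Sᵀ)⁻¹ * S)
            ≤ C * (σ⁻¹ * specNorm (A - 1)
                + (σ ^ 2)⁻¹ * (specNorm (Shat - S) + specNorm (A - 1))) := by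
  refine ⟨50000, by norm_num, ?_⟩
  intro J K _ _ S Shat σ A Asq hS hσ hσpos _ hA hAsq hsq hsmall
  simp only [specNorm_eq_l2_opNorm] at hS hA hsmall ⊢
  have hsymm : Asqᵀ = Asq := by simpa using hAsq.1.eq
  have hinv := l2_opNorm_inv_sqrt_le hAsq hsq hA
  have hinv_sub := l2_opNorm_inv_sqrt_sub_one_le hAsq hsq hA
  set B := Shat * Asq⁻¹
  have hBS : ‖B - S‖ ≤ 99 / 70 * ‖Shat - S‖ + 81 / 70 * ‖A - 1‖ := by
    refine (l2_opNorm_mul_sub_le Shat S Asq⁻¹).trans ?_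
    nlinarith [mul_le_mul hS hinv_sub (norm_nonneg _) zero_le_one,
      mul_le_mul_of_nonneg_left hinv (norm_nonneg (Shat - S))]
  have hBS' := hBS.trans (rational_le_of_sqrt_two_le (norm_nonneg _) (norm_nonneg _) hsmall)
  have hSbelow : Sᵀ.NormBoundedBelow σ := hσ ▸ minSingVal_normBoundedBelow S
  have hBbelow : Bᵀ.NormBoundedBelow (σ / 100) := (hSbelow.sub Bᵀ).mono (by
    rw [← transpose_sub, l2_opNorm_transpose]; linarith)
  have hweight : (σ / 100 * (σ / 100))⁻¹ + (σ / 100)⁻¹ * σ⁻¹ = 10100 * (σ ^ 2)⁻¹ := by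
    field_simp; ring
  rw [weighted_pinv_eq_of_mul_self hsymm hsq]
  calc _ ≤ 10100 * (σ ^ 2)⁻¹ * ‖B - S‖ * ‖Asq⁻¹‖ + σ⁻¹ * ‖Asq⁻¹ - 1‖ := by
        simpa only [hweight] using
          l2_opNorm_pinv_mul_sub_pinv_le hSbelow hBbelow hσpos (by positivity) Asq⁻¹
    _ ≤ 10100 * (σ ^ 2)⁻¹ * (99 / 70 * ‖Shat - S‖ + 81 / 70 * ‖A - 1‖) * (99 / 70)
          + σ⁻¹ * (81 / 70 * ‖A - 1‖) := by
        gcongr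
    _ ≤ _ := by
        have : 0 ≤ (σ ^ 2)⁻¹ := by positivity
        nlinarith [mul_nonneg this (norm_nonneg (Shat - S)), mul_nonneg this (norm_nonneg (A - 1)),
          mul_nonneg (inv_nonneg.mpr hσpos.le) (norm_nonneg (A - 1))]
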